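/- arXiv:1407.2053 — 3 statements merged into one kernel-verified Lean document; each statement's English description precedes it below -/
import Mathlib

section
/- For every simple hypergraph H, tr(tr(H)) = H, where tr denotes the hypergraph of minimal transversals. -/
/-! A set meets every minimal transversal of `E` iff it contains an edge of `E`: otherwise its
complement is a transversal, and a minimal transversal inside that complement misses it. Hence
`tr (tr E)` consists of the minimal sets containing an edge, which for an antichain `E` are
exactly its edges. -/

open Set

variable {α : Type*}

/-- `T` is a transversal of the hypergraph with hyperedge set `E`. -/
def Transversal (E : Set (Set α)) (T : Set α) : Prop := ∀ e ∈ E, (T ∩ e).Nonempty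

/-- The hypergraph of minimal transversals of `E`. -/
def tr (E : Set (Set α)) : Set (Set α) := {T | Minimal (Transversal E) T}

/-- A hypergraph (given by its hyperedge set `E ⊆ 2^α \ {∅}`) is simple if its hyperedges
are pairwise incomparable and every vertex belongs to some hyperedge. -/
def SimpleHypergraph (E : Set (Set α)) : Prop :=
  (∀ e ∈ E, ∀ e' ∈ E, e ⊆ e' → e = e') ∧ (∀ x : α, ∃ e ∈ E, x ∈ e) ∧ ∅ ∉ E

lemma Transversal.exists_subset_mem_tr [Finite α] {E : Set (Set α)} {T : Set α}
    (hT : Transversal E T) : ∃ M ⊆ T, M ∈ tr E :=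
  exists_minimal_le_of_wellFoundedLT _ T hT

lemma transversal_compl_iff {E : Set (Set α)} {T : Set α} :
    Transversal E Tᶜ ↔ ∀ e ∈ E, ¬e ⊆ T := by
  simp only [Transversal, ← sdiff_eq_compl_inter, sdiff_nonempty]

lemma transversal_tr_iff_mem_upperClosure [Finite α] {E : Set (Set α)} {T : Set α} :
    Transversal (tr E) T ↔ T ∈ upperClosure E := by
  rw [mem_upperClosure]
  constructor
  · intro hT
    by_contra! hno_edge
    obtain ⟨M, hMT, hM⟩ := (transversal_compl_iff.2 hno_edge).exists_subset_mem_tr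
    obtain ⟨x, hxT, hxM⟩ := hT M hM
    exact hMT hxM hxT
  · rintro ⟨e, he, heT⟩ M hM
    rw [inter_comm]
    exact (hM.prop e he).mono (inter_subset_inter_right M heT)

lemma SimpleHypergraph.isAntichain {E : Set (Set α)} (hE : SimpleHypergraph E) :
    IsAntichain (· ≤ ·) E :=
  fun e he e' he' hne hle => hne (hE.1 e he e' he' hle)

lemma tr_tr [Finite α] (E : Set (Set α)) : tr (tr E) = {T | Minimal (· ∈ upperClosure E) T} := by
  have h : Transversal (tr E) = (· ∈ upperClosure E) :=
    funext fun _ => propext transversal_tr_iff_mem_upperClosure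
  rw [← h]
  rfl

/-- For every simple hypergraph `H`, `tr(tr(H)) = H`. -/
theorem stmt_1 [Fintype α] (E : Set (Set α)) (hE : SimpleHypergraph E) :
    tr (tr E) = E := by
  ext T
  rw [tr_tr]
  exact hE.isAntichain.minimal_mem_upperClosure_iff_mem
end

section
/- For every simple hypergraph H and every vertex x of H, there exists a minimal transversal T of H with x ∈ T. -/
open Set

variable {α : Type*}

/-!
Pick a hyperedge `e ∋ x`. Since no other hyperedge is contained in `e`, the set `{x} ∪ eᶜ` is a
transversal, and it meets `e` only in `x`. Any minimal transversal below it must still meet `e`,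
hence contains `x`.
-/

namespace Transversal

variable {E : Set (Set α)} {e T : Set α} {x : α}

theorem insert_compl (hE : IsAntichain (· ⊆ ·) E) (he : e ∈ E) (hx : x ∈ e) :
    Transversal E (insert x eᶜ) := by
  intro e' he'
  by_cases hsub : e' ⊆ e
  · obtain rfl : e' = e := by_contra fun hne => hE he' he hne hsub
    exact ⟨x, mem_insert x _, hx⟩
  · obtain ⟨y, hye', hye⟩ := not_subset.mp hsub
    exact ⟨y, mem_insert_of_mem x hye, hye'⟩

theorem mem_of_subset_insert_compl (hT : Transversal E T) (he : e ∈ E)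
    (hTe : T ⊆ insert x eᶜ) : x ∈ T := by
  obtain ⟨y, hyT, hye⟩ := hT e he
  rcases hTe hyT with rfl | hye'
  · exact hyT
  · exact absurd hye hye'

end Transversal

/-- Every vertex of a simple hypergraph belongs to some minimal transversal. -/
theorem stmt_2 [Fintype α] (E : Set (Set α)) (hE : SimpleHypergraph E) (x : α) :
    ∃ T : Set α, Minimal (Transversal E) T ∧ x ∈ T := by
  obtain ⟨hinc, hcov, -⟩ := hE
  have hanti : IsAntichain (· ⊆ ·) E := fun a ha b hb hab hsub => hab (hinc a ha b hb hsub)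
  obtain ⟨e, he, hxe⟩ := hcov x
  obtain ⟨T, hTS, hTmin⟩ := exists_minimal_le_of_wellFoundedLT _ _
    (Transversal.insert_compl hanti he hxe)
  exact ⟨T, hTmin, hTmin.prop.mem_of_subset_insert_compl he hTS⟩
end

section
/- Let H be a hypergraph with every hyperedge nonempty and B(H) its co-bipartite incidence graph. Every minimal dominating set D of B(H) is either of the form {x, y_e} with x ∈ V(H) ∪ {v} and e ∈ E(H), or D ⊆ V(H) and D is a minimal transversal of H. -/
open Set

variable {V ι : Type*}

/-- `T ⊆ V` is a transversal of the hypergraph whose hyperedges are `e i`, `i : ι`. -/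
def TransversalI (e : ι → Set V) (T : Set V) : Prop := ∀ i, (T ∩ e i).Nonempty

/-- Auxiliary relation generating the co-bipartite incidence graph `B(H)`:
vertices are `some (Sum.inl x)` for `x ∈ V(H)`, `some (Sum.inr i)` for hyperedges,
and `none` is the extra vertex `v`. -/
def BRel (e : ι → Set V) : Option (V ⊕ ι) → Option (V ⊕ ι) → Prop
  | some (Sum.inl _), some (Sum.inl _) => True
  | some (Sum.inl x), some (Sum.inr i) => x ∈ e i
  | some (Sum.inr _), some (Sum.inr _) => True
  | none, some (Sum.inl _) => True
  | _, _ => False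

/-- The co-bipartite incidence graph `B(H)` of a hypergraph `H`. -/
def coBipIncidence (e : ι → Set V) : SimpleGraph (Option (V ⊕ ι)) :=
  SimpleGraph.fromRel (BRel e)

/-- The closed neighbourhood `N_G[A]` of a set of vertices. -/
def closedNbhdSet {W : Type*} (G : SimpleGraph W) (A : Set W) : Set W :=
  ⋃ x ∈ A, insert x (G.neighborSet x)

/-- `D` is a dominating set of `G`. -/
def Dominates {W : Type*} (G : SimpleGraph W) (D : Set W) : Prop :=
  ∀ v, v ∈ closedNbhdSet G D

/-! A minimal dominating set `D` of `B(H)` contains a vertex dominating `v`, which lies in the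
clique `V(H) ∪ {v}` and therefore dominates that whole clique. If `D` also contains some `y_i`,
that vertex dominates the clique `{y_e}`, so these two vertices already dominate and by
minimality they are all of `D`. Otherwise every `y_i` is dominated from `V(H)`, so `D ∩ V(H)` is a
transversal; conversely the copy of any transversal dominates `B(H)` (using `E(H) ≠ ∅` to reach
`v`), and minimality of `D` forces `D` to be the copy of a minimal transversal. -/

lemma dominates_iff {W : Type*} (G : SimpleGraph W) (A : Set W) :
    Dominates G A ↔ ∀ w, ∃ d ∈ A, w = d ∨ G.Adj d w := by
  simp [Dominates, closedNbhdSet, SimpleGraph.mem_neighborSet]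

section CoBipIncidence

variable {e : ι → Set V} {d : Option (V ⊕ ι)}

lemma coBipIncidence_adj_none :
    (coBipIncidence e).Adj d none ↔ ∃ x, d = some (Sum.inl x) := by
  rcases d with _ | x | i <;> simp [coBipIncidence, BRel]

lemma coBipIncidence_adj_inl {x : V} :
    (coBipIncidence e).Adj d (some (Sum.inl x)) ↔
      d = none ∨ (∃ y, y ≠ x ∧ d = some (Sum.inl y)) ∨
        ∃ i, x ∈ e i ∧ d = some (Sum.inr i) := by
  rcases d with _ | y | i <;> simp [coBipIncidence, BRel]

lemma coBipIncidence_adj_inr {i : ι} :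
    (coBipIncidence e).Adj d (some (Sum.inr i)) ↔
      (∃ j, j ≠ i ∧ d = some (Sum.inr j)) ∨ ∃ x ∈ e i, d = some (Sum.inl x) := by
  rcases d with _ | x | j <;> simp [coBipIncidence, BRel]

lemma eq_or_coBipIncidence_adj_of_left {a w : Option (V ⊕ ι)}
    (ha : a = none ∨ ∃ x, a = some (Sum.inl x))
    (hw : w = none ∨ ∃ x, w = some (Sum.inl x)) :
    w = a ∨ (coBipIncidence e).Adj a w := by
  rcases ha with rfl | ⟨x, rfl⟩ <;> rcases hw with rfl | ⟨y, rfl⟩ <;>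
    simp [coBipIncidence_adj_none, coBipIncidence_adj_inl, eq_comm, em]

lemma eq_or_coBipIncidence_adj_inr (i j : ι) :
    (some (Sum.inr i) : Option (V ⊕ ι)) = some (Sum.inr j) ∨
      (coBipIncidence e).Adj (some (Sum.inr j)) (some (Sum.inr i)) := by
  by_cases h : i = j <;> simp [coBipIncidence_adj_inr, h, eq_comm]

lemma dominates_pair {a : Option (V ⊕ ι)} (ha : a = none ∨ ∃ x, a = some (Sum.inl x))
    (j : ι) :
    Dominates (coBipIncidence e) {a, some (Sum.inr j)} := by
  rw [dominates_iff]
  rintro (_ | x | i)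
  · exact ⟨a, by simp, eq_or_coBipIncidence_adj_of_left ha (by simp)⟩
  · exact ⟨a, by simp, eq_or_coBipIncidence_adj_of_left ha (by simp)⟩
  · exact ⟨some (Sum.inr j), by simp, eq_or_coBipIncidence_adj_inr i j⟩

lemma dominates_image_of_transversalI [Nonempty ι] {T : Set V} (hT : TransversalI e T) :
    Dominates (coBipIncidence e) ((fun x => some (Sum.inl x)) '' T) := by
  rw [dominates_iff]
  obtain ⟨x₀, hx₀, -⟩ := hT (Classical.arbitrary ι)
  rintro (_ | x | i)
  · exact ⟨_, mem_image_of_mem _ hx₀, by simp [coBipIncidence_adj_none]⟩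
  · exact ⟨_, mem_image_of_mem _ hx₀,
      eq_or_coBipIncidence_adj_of_left (Or.inr ⟨x₀, rfl⟩) (Or.inr ⟨x, rfl⟩)⟩
  · obtain ⟨y, hyT, hy⟩ := hT i
    exact ⟨_, mem_image_of_mem _ hyT,
      Or.inr (coBipIncidence_adj_inr.2 (Or.inr ⟨y, hy, rfl⟩))⟩

lemma transversalI_preimage_of_dominates {D : Set (Option (V ⊕ ι))}
    (hD : Dominates (coBipIncidence e) D) (hY : ∀ i, some (Sum.inr i) ∉ D) :
    TransversalI e ((fun x => some (Sum.inl x)) ⁻¹' D) := by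
  intro i
  obtain ⟨d, hdD, rfl | hd⟩ := (dominates_iff _ _).1 hD (some (Sum.inr i))
  · exact absurd hdD (hY i)
  obtain ⟨j, -, rfl⟩ | ⟨x, hx, rfl⟩ := coBipIncidence_adj_inr.1 hd
  · exact absurd hdD (hY j)
  · exact ⟨x, hdD, hx⟩

lemma eq_pair_of_minimal_dominates {D : Set (Option (V ⊕ ι))}
    (hD : Minimal (Dominates (coBipIncidence e)) D) {j : ι} (hj : some (Sum.inr j) ∈ D) :
    ∃ a, (a = none ∨ ∃ x, a = some (Sum.inl x)) ∧ D = {a, some (Sum.inr j)} := by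
  obtain ⟨a, haD, ha⟩ := (dominates_iff _ _).1 hD.prop none
  have ha' : a = none ∨ ∃ x, a = some (Sum.inl x) := ha.imp Eq.symm coBipIncidence_adj_none.1
  exact ⟨a, ha', (hD.eq_of_subset (dominates_pair ha' j) (pair_subset haD hj)).symm⟩

lemma eq_image_of_minimal_dominates [Nonempty ι] {D : Set (Option (V ⊕ ι))}
    (hD : Minimal (Dominates (coBipIncidence e)) D) (hY : ∀ i, some (Sum.inr i) ∉ D) :
    ∃ T, Minimal (TransversalI e) T ∧ D = (fun x => some (Sum.inl x)) '' T := by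
  set f : V → Option (V ⊕ ι) := fun x => some (Sum.inl x)
  have hf : Function.Injective f := (Option.some_injective _).comp Sum.inl_injective
  have hT : TransversalI e (f ⁻¹' D) := transversalI_preimage_of_dominates hD.prop hY
  have hDT : D = f '' (f ⁻¹' D) :=
    (hD.eq_of_subset (dominates_image_of_transversalI hT) (image_preimage_subset f D)).symm
  refine ⟨f ⁻¹' D, ⟨hT, fun T' hT' hT'T => ?_⟩, hDT⟩
  have hsub : f '' T' ⊆ D := hDT ▸ image_mono hT'T
  rw [← image_subset_image_iff hf, ← hDT]
  exact hD.le_of_le (dominates_image_of_transversalI hT') hsub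

end CoBipIncidence

theorem stmt_6_general [Nonempty ι] (e : ι → Set V)
    (D : Set (Option (V ⊕ ι))) (hD : Minimal (Dominates (coBipIncidence e)) D) :
    (∃ (a : Option (V ⊕ ι)) (i : ι),
        (a = none ∨ ∃ x : V, a = some (Sum.inl x)) ∧ D = {a, some (Sum.inr i)}) ∨
    (∃ T : Set V, Minimal (TransversalI e) T ∧ D = (fun x => some (Sum.inl x)) '' T) := by
  by_cases hY : ∃ i, some (Sum.inr i) ∈ D
  · obtain ⟨i, hi⟩ := hY
    obtain ⟨a, ha, rfl⟩ := eq_pair_of_minimal_dominates hD hi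
    exact Or.inl ⟨a, i, ha, rfl⟩
  · simp only [not_exists] at hY
    exact Or.inr (eq_image_of_minimal_dominates hD hY)

/-- Every minimal dominating set of `B(H)` is either of the form `{a, y_i}` with
`a ∈ V(H) ∪ {v}` and `i` a hyperedge, or is (the copy of) a minimal transversal of `H`. -/
theorem stmt_6 [Nonempty ι] (e : ι → Set V) (he : ∀ i, (e i).Nonempty)
    (D : Set (Option (V ⊕ ι))) (hD : Minimal (Dominates (coBipIncidence e)) D) :
    (∃ (a : Option (V ⊕ ι)) (i : ι),
        (a = none ∨ ∃ x : V, a = some (Sum.inl x)) ∧ D = {a, some (Sum.inr i)}) ∨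
    (∃ T : Set V, Minimal (TransversalI e) T ∧ D = (fun x => some (Sum.inl x)) '' T) :=
  stmt_6_general e D hD
end
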